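/- arXiv:2003.12531 — 3 statements merged into one kernel-verified Lean document; each statement's English description precedes it below -/
import Mathlib

section
/- There is no distributive law of type bL ∘ P ⇒ P ∘ bL for the bounded lattice monad over the finite powerset monad; equivalently, there is no composite theory of the theory of join semilattices (with bottom) after the theory of bounded lattices. -/
/-! ## Algebraic theories, equational logic, and composite theories (Pirog–Staton) -/

/-- An algebraic signature: a set of operation symbols with arities. -/
structure Sig : Type 1 where
  ops : Type
  ar : ops → ℕ

/-- Terms over a signature with variables in `X`. -/
inductive Tm (σ : Sig) (X : Type) : Type
  | var : X → Tm σ X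
  | op : (g : σ.ops) → (Fin (σ.ar g) → Tm σ X) → Tm σ X

/-- Simultaneous substitution of terms for variables. -/
def Tm.bind {σ : Sig} {X Y : Type} : Tm σ X → (X → Tm σ Y) → Tm σ Y
  | .var x, f => f x
  | .op g a, f => .op g fun i => (a i).bind f

/-- Substitution of variables for variables (renaming). -/
def Tm.rename {σ : Sig} {X Y : Type} (t : Tm σ X) (f : X → Y) : Tm σ Y :=
  t.bind fun x => .var (f x)

/-- The set of variables occurring in a term. -/
def Tm.vars {σ : Sig} {X : Type} : Tm σ X → Set X
  | .var x => {x}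
  | .op _ a => ⋃ i, (a i).vars

/-- An algebraic theory: a signature together with a set of equations
(pairs of terms over natural-number variables). -/
structure Theory : Type 1 where
  sig : Sig
  axioms : Tm sig ℕ → Tm sig ℕ → Prop

/-- Provable equality in equational logic from the axioms of a theory. -/
inductive Theory.Eq (Th : Theory) : {X : Type} → Tm Th.sig X → Tm Th.sig X → Prop
  | ax {X : Type} {l r : Tm Th.sig ℕ} (h : Th.axioms l r) (f : ℕ → Tm Th.sig X) :
      Theory.Eq Th (l.bind f) (r.bind f)
  | refl {X : Type} (t : Tm Th.sig X) : Theory.Eq Th t t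
  | symm {X : Type} {a b : Tm Th.sig X} : Theory.Eq Th a b → Theory.Eq Th b a
  | trans {X : Type} {a b c : Tm Th.sig X} :
      Theory.Eq Th a b → Theory.Eq Th b c → Theory.Eq Th a c
  | congr {X : Type} (g : Th.sig.ops) {a b : Fin (Th.sig.ar g) → Tm Th.sig X}
      (h : ∀ i, Theory.Eq Th (a i) (b i)) : Theory.Eq Th (.op g a) (.op g b)

/-- A theory is consistent if distinct variables are not provably equal. -/
def Theory.Consistent (Th : Theory) : Prop :=
  ∀ x y : ℕ, Th.Eq (X := ℕ) (.var x) (.var y) → x = y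

/-- Disjoint union of signatures. -/
def Sig.sum (σ τ : Sig) : Sig := ⟨σ.ops ⊕ τ.ops, Sum.elim σ.ar τ.ar⟩

/-- Embedding of terms of the left signature into the sum. -/
def Tm.inL {σ τ : Sig} {X : Type} : Tm σ X → Tm (σ.sum τ) X
  | .var x => .var x
  | .op g a => .op (Sum.inl g) fun i => Tm.inL (a i)

/-- Embedding of terms of the right signature into the sum. -/
def Tm.inR {σ τ : Sig} {X : Type} : Tm τ X → Tm (σ.sum τ) X
  | .var x => .var x
  | .op g a => .op (Sum.inr g) fun i => Tm.inR (a i)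

/-- A separated term `t[s_x/x]`: a `τ`-term `t` whose variables are substituted
by `σ`-terms `s x`. -/
def sep {σ τ : Sig} {X : Type} (t : Tm τ X) (s : X → Tm σ ℕ) : Tm (σ.sum τ) ℕ :=
  (Tm.inR t).bind fun x => Tm.inL (s x)

/-- Equality modulo `(T, S)` of two separated terms, in the sense of Pirog and Staton. -/
def EqMod (S T : Theory) {X X' : Type}
    (t : Tm T.sig X) (s : X → Tm S.sig ℕ)
    (t' : Tm T.sig X') (s' : X' → Tm S.sig ℕ) : Prop :=
  ∃ (Y : Type) (f₁ : X → Y) (f₂ : X' → Y) (sb : Y → Tm S.sig ℕ),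
    T.Eq (t.rename f₁) (t'.rename f₂) ∧
    (∀ x, S.Eq (s x) (sb (f₁ x))) ∧
    (∀ x', S.Eq (s' x') (sb (f₂ x')))

/-- A composite theory of `T` after `S`: a theory on the disjoint union of the
signatures, containing both `S` and `T`, in which every term is provably equal to
a separated term (a `T`-term of `S`-terms), essentially uniquely. -/
structure Composite (S T : Theory) where
  axioms : Tm (S.sig.sum T.sig) ℕ → Tm (S.sig.sum T.sig) ℕ → Prop
  containsS : ∀ {X : Type} (a b : Tm S.sig X), S.Eq a b →
    Theory.Eq ⟨S.sig.sum T.sig, axioms⟩ (Tm.inL a) (Tm.inL b)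
  containsT : ∀ {X : Type} (a b : Tm T.sig X), T.Eq a b →
    Theory.Eq ⟨S.sig.sum T.sig, axioms⟩ (Tm.inR a) (Tm.inR b)
  separation : ∀ u : Tm (S.sig.sum T.sig) ℕ,
    ∃ (X : Type) (t : Tm T.sig X) (s : X → Tm S.sig ℕ),
      Theory.Eq ⟨S.sig.sum T.sig, axioms⟩ u (sep t s)
  essentiallyUnique : ∀ {X X' : Type} (t : Tm T.sig X) (s : X → Tm S.sig ℕ)
      (t' : Tm T.sig X') (s' : X' → Tm S.sig ℕ),
      Theory.Eq ⟨S.sig.sum T.sig, axioms⟩ (sep t s) (sep t' s') →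
      EqMod S T t s t' s'

/-- The underlying theory of a composite. -/
def Composite.theory {S T : Theory} (C : Composite S T) : Theory :=
  ⟨S.sig.sum T.sig, C.axioms⟩

/-- A set of terms is stable if it is closed under renaming of variables. -/
def Stable {σ : Sig} (Ts : Set (Tm σ ℕ)) : Prop :=
  ∀ t ∈ Ts, ∀ f : ℕ → ℕ, t.rename f ∈ Ts

/-- A set of terms is universal if every term is provably equal to one in the set. -/
def Universal (Th : Theory) (Ts : Set (Tm Th.sig ℕ)) : Prop :=
  ∀ t : Tm Th.sig ℕ, ∃ t' ∈ Ts, Th.Eq t t'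

/-- Apply a binary term (a term with variables among `0` and `1`) to two arguments. -/
def subst2 {σ : Sig} {X : Type} (b : Tm σ ℕ) (t u : Tm σ X) : Tm σ X :=
  b.bind fun i => if i = 0 then t else u

/-- Operations of the theory of bounded lattices. -/
inductive BLOp : Type | top | bot | join | meet

/-- Signature of bounded lattices. -/
def BLSig : Sig :=
  ⟨BLOp, fun o => match o with | .top => 0 | .bot => 0 | .join => 2 | .meet => 2⟩

def BL.top {X : Type} : Tm BLSig X := .op .top Fin.elim0
def BL.bot {X : Type} : Tm BLSig X := .op .bot Fin.elim0
def BL.join {X : Type} (t u : Tm BLSig X) : Tm BLSig X :=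
  .op .join fun i => if i.val = 0 then t else u
def BL.meet {X : Type} (t u : Tm BLSig X) : Tm BLSig X :=
  .op .meet fun i => if i.val = 0 then t else u

/-- Axioms of bounded lattices. -/
inductive BLAx : Tm BLSig ℕ → Tm BLSig ℕ → Prop
  | meetUnitL : BLAx (BL.meet BL.top (.var 0)) (.var 0)
  | meetUnitR : BLAx (BL.meet (.var 0) BL.top) (.var 0)
  | joinUnitL : BLAx (BL.join BL.bot (.var 0)) (.var 0)
  | joinUnitR : BLAx (BL.join (.var 0) BL.bot) (.var 0)
  | joinAssoc : BLAx (BL.join (BL.join (.var 0) (.var 1)) (.var 2))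
                     (BL.join (.var 0) (BL.join (.var 1) (.var 2)))
  | meetAssoc : BLAx (BL.meet (BL.meet (.var 0) (.var 1)) (.var 2))
                     (BL.meet (.var 0) (BL.meet (.var 1) (.var 2)))
  | joinComm : BLAx (BL.join (.var 0) (.var 1)) (BL.join (.var 1) (.var 0))
  | meetComm : BLAx (BL.meet (.var 0) (.var 1)) (BL.meet (.var 1) (.var 0))
  | joinIdem : BLAx (BL.join (.var 0) (.var 0)) (.var 0)
  | meetIdem : BLAx (BL.meet (.var 0) (.var 0)) (.var 0)
  | absorb1 : BLAx (BL.join (.var 0) (BL.meet (.var 0) (.var 1))) (.var 0)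
  | absorb2 : BLAx (BL.meet (.var 0) (BL.join (.var 0) (.var 1))) (.var 0)

/-- The theory of bounded lattices, presenting the bounded lattice monad. -/
def BLTheory : Theory := ⟨BLSig, BLAx⟩

/-- Operations of the theory of join semilattices with bottom. -/
inductive JslOp : Type | bot | join

/-- Signature of join semilattices with bottom. -/
def JslSig : Sig := ⟨JslOp, fun o => match o with | .bot => 0 | .join => 2⟩

def Jsl.bot {X : Type} : Tm JslSig X := .op .bot Fin.elim0
def Jsl.join {X : Type} (t u : Tm JslSig X) : Tm JslSig X :=
  .op .join fun i => if i.val = 0 then t else u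

/-- Axioms of join semilattices with bottom: unit laws, associativity,
commutativity, idempotence. -/
inductive JslAx : Tm JslSig ℕ → Tm JslSig ℕ → Prop
  | unitL : JslAx (Jsl.join Jsl.bot (.var 0)) (.var 0)
  | unitR : JslAx (Jsl.join (.var 0) Jsl.bot) (.var 0)
  | assoc : JslAx (Jsl.join (Jsl.join (.var 0) (.var 1)) (.var 2))
                  (Jsl.join (.var 0) (Jsl.join (.var 1) (.var 2)))
  | comm : JslAx (Jsl.join (.var 0) (.var 1)) (Jsl.join (.var 1) (.var 0))
  | idem : JslAx (Jsl.join (.var 0) (.var 0)) (.var 0)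

/-- The theory of join semilattices with bottom, presenting the finite powerset monad. -/
def JSLTheory : Theory := ⟨JslSig, JslAx⟩

attribute [reducible] BLTheory JSLTheory


/-! ### Basic term lemmas -/

theorem Tm.bind_assoc' {σ : Sig} {X Y Z : Type} (t : Tm σ X) (f : X → Tm σ Y) (g : Y → Tm σ Z) :
    (t.bind f).bind g = t.bind (fun x => (f x).bind g) := by
  induction t with
  | var x => rfl
  | op o a ih => simp only [Tm.bind]; congr 1; funext i; exact ih i

theorem Tm.bind_var' {σ : Sig} {X : Type} (t : Tm σ X) : t.bind Tm.var = t := by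
  induction t with
  | var x => rfl
  | op o a ih => simp only [Tm.bind]; congr 1; funext i; exact ih i

theorem eqBind {Th : Theory} {X : Type} {a b : Tm Th.sig X} (h : Th.Eq a b) :
    ∀ {Y : Type} (f : X → Tm Th.sig Y), Th.Eq (a.bind f) (b.bind f) := by
  induction h with
  | ax h f₀ => intro Y f; rw [Tm.bind_assoc', Tm.bind_assoc']; exact .ax h _
  | refl t => intro Y f; exact .refl _
  | symm _ ih => intro Y f; exact .symm (ih f)
  | trans _ _ ih1 ih2 => intro Y f; exact .trans (ih1 f) (ih2 f)
  | congr g h ih => intro Y f; exact .congr g (fun i => ih i f)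

theorem inL_bind {σ τ : Sig} {X Y : Type} (t : Tm σ X) (f : X → Tm σ Y) :
    Tm.inL (σ := σ) (τ := τ) (t.bind f) = (Tm.inL t).bind (fun x => Tm.inL (f x)) := by
  induction t with
  | var x => rfl
  | op o a ih => simp only [Tm.bind, Tm.inL]; congr 1; funext i; exact ih i

theorem sep_bind {σ τ : Sig} {X : Type} (t : Tm τ X) (s : X → Tm σ ℕ) (σ' : ℕ → Tm σ ℕ) :
    (sep t s).bind (fun n => Tm.inL (σ' n)) = sep t (fun x => (s x).bind σ') := by
  unfold sep
  rw [Tm.bind_assoc']; congr 1; funext x; rw [inL_bind]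

theorem vars_bind {σ : Sig} {X Y : Type} (t : Tm σ X) (f : X → Tm σ Y) :
    (t.bind f).vars = ⋃ x ∈ t.vars, (f x).vars := by
  induction t with
  | var x => simp [Tm.bind, Tm.vars]
  | op o a ih => simp only [Tm.bind, Tm.vars, ih, Set.biUnion_iUnion]

theorem vars_rename {σ : Sig} {X Y : Type} (t : Tm σ X) (f : X → Y) :
    (t.rename f).vars = f '' t.vars := by
  unfold Tm.rename; rw [vars_bind]; ext y; simp [Tm.vars, eq_comm]

theorem iUnion_fin_two {α : Type*} (V : Fin 2 → Set α) : (⋃ i, V i) = V 0 ∪ V 1 := by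
  ext x; simp [Set.mem_iUnion, Fin.exists_fin_two]

/-! ### Evaluation of bounded-lattice terms -/

def evalBL {L : Type} [Lattice L] [BoundedOrder L] {X : Type} (g : X → L) : Tm BLSig X → L
  | .var x => g x
  | .op BLOp.top _ => ⊤
  | .op BLOp.bot _ => ⊥
  | .op BLOp.join a => evalBL g (a (0 : Fin 2)) ⊔ evalBL g (a (1 : Fin 2))
  | .op BLOp.meet a => evalBL g (a (0 : Fin 2)) ⊓ evalBL g (a (1 : Fin 2))

@[simp] theorem evalBL_var {L : Type} [Lattice L] [BoundedOrder L] {X : Type} (g : X → L) (x : X) :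
    evalBL g (.var x) = g x := rfl

@[simp] theorem evalBL_join {L : Type} [Lattice L] [BoundedOrder L] {X : Type} (g : X → L)
    (t u : Tm BLSig X) : evalBL g (BL.join t u) = evalBL g t ⊔ evalBL g u := rfl

@[simp] theorem evalBL_meet {L : Type} [Lattice L] [BoundedOrder L] {X : Type} (g : X → L)
    (t u : Tm BLSig X) : evalBL g (BL.meet t u) = evalBL g t ⊓ evalBL g u := rfl

@[simp] theorem evalBL_top {L : Type} [Lattice L] [BoundedOrder L] {X : Type} (g : X → L) :
    evalBL g (BL.top (X := X)) = ⊤ := rfl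

@[simp] theorem evalBL_bot {L : Type} [Lattice L] [BoundedOrder L] {X : Type} (g : X → L) :
    evalBL g (BL.bot (X := X)) = ⊥ := rfl


theorem evalBL_bind {L : Type} [Lattice L] [BoundedOrder L] {X Y : Type}
    (g : Y → L) (t : Tm BLSig X) (f : X → Tm BLSig Y) :
    evalBL g (t.bind f) = evalBL (fun x => evalBL g (f x)) t := by
  induction t with
  | var x => rfl
  | op o a ih =>
    cases o <;> simp only [Tm.bind, evalBL] <;> rw [ih (0 : Fin 2), ih (1 : Fin 2)]

theorem evalBL_sound {L : Type} [Lattice L] [BoundedOrder L] {X : Type}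
    {a b : Tm BLTheory.sig X} (h : BLTheory.Eq a b) (g : X → L) :
    evalBL g a = evalBL g b := by
  induction h with
  | ax h f =>
    rw [evalBL_bind, evalBL_bind]
    cases h <;>
      simp [sup_assoc, inf_assoc, sup_comm, inf_comm, sup_idem, inf_idem,
        sup_inf_self, inf_sup_self]
  | refl t => rfl
  | symm _ ih => exact ih.symm
  | trans _ _ ih1 ih2 => exact ih1.trans ih2
  | congr o h ih =>
    cases o <;> simp only [evalBL] <;> rw [ih (0 : Fin 2), ih (1 : Fin 2)]

theorem evalBL_mono {L : Type} [Lattice L] [BoundedOrder L] {X : Type}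
    {g g' : X → L} (hg : ∀ x, g x ≤ g' x) (t : Tm BLSig X) :
    evalBL g t ≤ evalBL g' t := by
  induction t with
  | var x => exact hg x
  | op o a ih =>
    cases o <;> simp only [evalBL]
    · exact le_refl _
    · exact le_refl _
    · exact sup_le_sup (ih _) (ih _)
    · exact inf_le_inf (ih _) (ih _)

theorem evalBL_prod {L M : Type} [Lattice L] [BoundedOrder L] [Lattice M] [BoundedOrder M]
    {X : Type} (g₁ : X → L) (g₂ : X → M) (t : Tm BLSig X) :
    evalBL (fun x => (g₁ x, g₂ x)) t = (evalBL g₁ t, evalBL g₂ t) := by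
  induction t with
  | var x => rfl
  | op o a ih =>
    cases o <;> simp only [evalBL] <;> first
    | rfl
    | (rw [ih (0 : Fin 2), ih (1 : Fin 2)]; rfl)

/-! ### Jsl terms: provable equality preserves the set of variables -/

@[simp] theorem bind_var_app {σ : Sig} {X Y : Type} (x : X) (f : X → Tm σ Y) :
    (Tm.var x).bind f = f x := rfl

theorem bind_jsl_join {X Y : Type} (a b : Tm JslSig X) (f : X → Tm JslSig Y) :
    (Jsl.join a b).bind f = Jsl.join (a.bind f) (b.bind f) := by
  simp only [Jsl.join, Tm.bind]
  congr 1; funext i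
  by_cases h : (i : Fin 2).val = 0 <;> simp [h]

theorem bind_jsl_bot {X Y : Type} (f : X → Tm JslSig Y) :
    (Jsl.bot).bind f = Jsl.bot (X := Y) := by
  simp only [Jsl.bot, Tm.bind]
  congr 1; funext i
  exact absurd i.isLt (by simp [show JslSig.ar JslOp.bot = 0 from rfl])

theorem vars_jsl_join {X : Type} (a b : Tm JslSig X) :
    (Jsl.join a b).vars = a.vars ∪ b.vars := by
  show (⋃ i : Fin 2, (if (i : Fin 2).val = 0 then a else b).vars) = _
  rw [iUnion_fin_two]
  simp

theorem vars_jsl_bot {X : Type} : (Jsl.bot (X := X)).vars = ∅ := by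
  haveI : IsEmpty (Fin (JslSig.ar JslOp.bot)) := by
    rw [show JslSig.ar JslOp.bot = 0 from rfl]; infer_instance
  exact Set.iUnion_of_empty _

theorem jsl_vars_eq {X : Type} {a b : Tm JSLTheory.sig X} (h : Theory.Eq JSLTheory a b) :
    a.vars = b.vars := by
  induction h with
  | ax h f =>
    cases h <;>
      simp [bind_jsl_join, bind_jsl_bot, vars_jsl_join, vars_jsl_bot,
        Set.union_assoc, Set.union_comm, Set.union_left_comm]
  | refl t => rfl
  | symm _ ih => exact ih.symm
  | trans _ _ ih1 ih2 => exact ih1.trans ih2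
  | congr o h ih =>
    show (⋃ i, _) = (⋃ i, _)
    exact Set.iUnion_congr ih

/-! ### The transfer lemma -/

theorem transfer {X X' : Type} {t : Tm JslSig X} {s : X → Tm BLSig ℕ}
    {t' : Tm JslSig X'} {s' : X' → Tm BLSig ℕ}
    (h : EqMod BLTheory JSLTheory t s t' s')
    {L : Type} [Lattice L] [BoundedOrder L] (g : ℕ → L) :
    (fun w => evalBL g (s w)) '' t.vars = (fun w => evalBL g (s' w)) '' t'.vars := by
  obtain ⟨Y, f₁, f₂, sb, hT, hs, hs'⟩ := h
  have hv : f₁ '' t.vars = f₂ '' t'.vars := by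
    have h2 := jsl_vars_eq hT
    rwa [vars_rename, vars_rename] at h2
  have e1 : (fun w => evalBL g (s w)) '' t.vars
      = (fun y => evalBL g (sb y)) '' (f₁ '' t.vars) := by
    rw [Set.image_image]
    exact Set.image_congr fun w _ => evalBL_sound (hs w) g
  have e2 : (fun w => evalBL g (s' w)) '' t'.vars
      = (fun y => evalBL g (sb y)) '' (f₂ '' t'.vars) := by
    rw [Set.image_image]
    exact Set.image_congr fun w _ => evalBL_sound (hs' w) g
  rw [e1, e2, hv]

/-! ### The combined signature -/

@[simp] theorem inL_var {σ τ : Sig} {X : Type} (x : X) :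
    Tm.inL (σ := σ) (τ := τ) (Tm.var x) = Tm.var x := rfl

@[simp] theorem inR_var {σ τ : Sig} {X : Type} (x : X) :
    Tm.inR (σ := σ) (τ := τ) (Tm.var x) = Tm.var x := rfl

/-- The combined signature of bounded lattices and join semilattices. -/
abbrev CSig : Sig := Sig.sum BLSig JslSig

/-- Lattice join in the combined signature. -/
def CJ {X : Type} (a b : Tm CSig X) : Tm CSig X :=
  .op (Sum.inl BLOp.join) fun i => if i.val = 0 then a else b

/-- Semilattice join ("union") in the combined signature. -/
def CP {X : Type} (a b : Tm CSig X) : Tm CSig X :=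
  .op (Sum.inr JslOp.join) fun i => if i.val = 0 then a else b

/-- Lattice bottom in the combined signature. -/
def CBot {X : Type} : Tm CSig X := Tm.inL BL.bot

theorem inL_join {X : Type} (t u : Tm BLSig X) :
    Tm.inL (τ := JslSig) (BL.join t u) = CJ (Tm.inL t) (Tm.inL u) := by
  simp only [BL.join, Tm.inL, CJ]
  congr 1; funext i
  by_cases h : i.val = 0 <;> simp [h]

theorem inR_join {X : Type} (t u : Tm JslSig X) :
    Tm.inR (σ := BLSig) (Jsl.join t u) = CP (Tm.inR t) (Tm.inR u) := by
  simp only [Jsl.join, Tm.inR, CP]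
  congr 1; funext i
  by_cases h : i.val = 0 <;> simp [h]

@[simp] theorem inL_bot {X : Type} : Tm.inL (τ := JslSig) (BL.bot (X := X)) = CBot := rfl

theorem bind_CJ {X Y : Type} (a b : Tm CSig X) (f : X → Tm CSig Y) :
    (CJ a b).bind f = CJ (a.bind f) (b.bind f) := by
  simp only [CJ, Tm.bind]
  congr 1; funext i
  by_cases h : i.val = 0 <;> simp [h]

theorem bind_CP {X Y : Type} (a b : Tm CSig X) (f : X → Tm CSig Y) :
    (CP a b).bind f = CP (a.bind f) (b.bind f) := by
  simp only [CP, Tm.bind]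
  congr 1; funext i
  by_cases h : i.val = 0 <;> simp [h]

@[simp] theorem bind_CBot {X Y : Type} (f : X → Tm CSig Y) :
    (CBot).bind f = CBot (X := Y) := by
  simp only [CBot, BL.bot, Tm.inL, Tm.bind]
  congr 1; funext i
  exact absurd i.isLt (by simp [show CSig.ar (Sum.inl BLOp.bot) = 0 from rfl])

/-! ### Lifting axioms to the composite theory -/

theorem blEq_of_ax {l r : Tm BLSig ℕ} (h : BLAx l r) : Theory.Eq BLTheory l r := by
  have h2 := Theory.Eq.ax (Th := BLTheory) h Tm.var
  rwa [Tm.bind_var', Tm.bind_var'] at h2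

theorem jslEq_of_ax {l r : Tm JslSig ℕ} (h : JslAx l r) : Theory.Eq JSLTheory l r := by
  have h2 := Theory.Eq.ax (Th := JSLTheory) h Tm.var
  rwa [Tm.bind_var', Tm.bind_var'] at h2

/-- The underlying theory of the putative composite. -/
def CTh (C : Composite BLTheory JSLTheory) : Theory :=
  ⟨Sig.sum BLTheory.sig JSLTheory.sig, C.axioms⟩

section WithComposite

variable (C : Composite BLTheory JSLTheory)

theorem compS {a b : Tm BLSig ℕ} (h : Theory.Eq BLTheory a b) (f : ℕ → Tm CSig ℕ) :
    Theory.Eq (CTh C) ((Tm.inL a).bind f) ((Tm.inL b).bind f) :=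
  eqBind (C.containsS a b h) f

theorem compT {a b : Tm JslSig ℕ} (h : Theory.Eq JSLTheory a b) (f : ℕ → Tm CSig ℕ) :
    Theory.Eq (CTh C) ((Tm.inR a).bind f) ((Tm.inR b).bind f) :=
  eqBind (C.containsT a b h) f

theorem congrCJ {a a' b b' : Tm CSig ℕ} (h1 : Theory.Eq (CTh C) a a')
    (h2 : Theory.Eq (CTh C) b b') : Theory.Eq (CTh C) (CJ a b) (CJ a' b') := by
  refine Theory.Eq.congr (Th := CTh C) (Sum.inl BLOp.join) (fun i => ?_)
  by_cases h : i.val = 0 <;> simp only [h, if_true, if_false] <;> assumption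

theorem cj_idem (x : Tm CSig ℕ) : Theory.Eq (CTh C) (CJ x x) x := by
  have h := compS C (blEq_of_ax BLAx.joinIdem) (fun _ => x)
  simpa [inL_join, bind_CJ] using h

theorem cj_unitR (x : Tm CSig ℕ) : Theory.Eq (CTh C) (CJ x CBot) x := by
  have h := compS C (blEq_of_ax BLAx.joinUnitR) (fun _ => x)
  simpa [inL_join, bind_CJ] using h

theorem cj_unitL (x : Tm CSig ℕ) : Theory.Eq (CTh C) (CJ CBot x) x := by
  have h := compS C (blEq_of_ax BLAx.joinUnitL) (fun _ => x)
  simpa [inL_join, bind_CJ] using h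

theorem cp_idem (x : Tm CSig ℕ) : Theory.Eq (CTh C) (CP x x) x := by
  have h := compT C (jslEq_of_ax JslAx.idem) (fun _ => x)
  simpa [inR_join, bind_CP] using h

theorem cp_comm (x y : Tm CSig ℕ) : Theory.Eq (CTh C) (CP x y) (CP y x) := by
  have h := compT C (jslEq_of_ax JslAx.comm) (fun n => if n = 0 then x else y)
  simpa [inR_join, bind_CP] using h

end WithComposite

/-! ### The main argument -/

/-- The mixed term `(x₀ + x₁) ∨ (x₂ + x₃)`. -/
def uTm : Tm CSig ℕ := CJ (CP (.var 0) (.var 1)) (CP (.var 2) (.var 3))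

/-- The separated term `x₀ + x₁`. -/
def t2 : Tm JslSig ℕ := Jsl.join (.var 0) (.var 1)

def P01 : Tm CSig ℕ := CP (.var 0) (.var 1)

theorem sep_t2 : sep t2 Tm.var = P01 := by
  unfold sep t2 P01
  rw [inR_join]
  simp [bind_CP]

-- the four substitutions
def sg1 : ℕ → Tm BLSig ℕ := fun n =>
  if n = 0 then .var 0 else if n = 1 then .var 1 else
  if n = 2 then .var 0 else if n = 3 then .var 1 else BL.bot
def sg2 : ℕ → Tm BLSig ℕ := fun n =>
  if n = 0 then .var 0 else if n = 1 then .var 1 else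
  if n = 2 then .var 1 else if n = 3 then .var 0 else BL.bot
def sg3 : ℕ → Tm BLSig ℕ := fun n =>
  if n = 0 then .var 0 else if n = 1 then .var 1 else BL.bot
def sg4 : ℕ → Tm BLSig ℕ := fun n =>
  if n = 2 then .var 0 else if n = 3 then .var 1 else BL.bot

-- boolean assignments (two coordinates of `Bool × Bool` valued assignments)
def ptB (v0 v1 v2 v3 : Bool) : ℕ → Bool := fun n =>
  if n = 0 then v0 else if n = 1 then v1 else if n = 2 then v2 else if n = 3 then v3 else false

def A1 : ℕ → Bool := ptB true false true false
def B1 : ℕ → Bool := ptB false true false true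
def A2 : ℕ → Bool := ptB true false false true
def B2 : ℕ → Bool := ptB false true true false
def A3 : ℕ → Bool := ptB true false false false
def B3 : ℕ → Bool := ptB false true false false
def A4 : ℕ → Bool := ptB false false true false
def B4 : ℕ → Bool := ptB false false false true

def Gass : ℕ → Bool × Bool := fun n =>
  if n = 0 then (true, false) else if n = 1 then (false, true) else (false, false)

theorem bot_bb : (⊥ : Bool × Bool) = (false, false) := rfl

theorem hG1 : (fun n => evalBL Gass (sg1 n)) = (fun n => (A1 n, B1 n)) := by
  funext n; rcases n with _ | _ | _ | _ | n <;>
    simp [Gass, sg1, A1, B1, ptB, bot_bb]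

theorem hG2 : (fun n => evalBL Gass (sg2 n)) = (fun n => (A2 n, B2 n)) := by
  funext n; rcases n with _ | _ | _ | _ | n <;>
    simp [Gass, sg2, A2, B2, ptB, bot_bb]

theorem hG3 : (fun n => evalBL Gass (sg3 n)) = (fun n => (A3 n, B3 n)) := by
  funext n; rcases n with _ | _ | _ | _ | n <;>
    simp [Gass, sg3, A3, B3, ptB, bot_bb]

theorem hG4 : (fun n => evalBL Gass (sg4 n)) = (fun n => (A4 n, B4 n)) := by
  funext n; rcases n with _ | _ | _ | _ | n <;>
    simp [Gass, sg4, A4, B4, ptB, bot_bb]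

theorem himg_rhs :
    (fun w => evalBL Gass (Tm.var w)) '' (Tm.vars t2)
      = {((true, false) : Bool × Bool), (false, true)} := by
  unfold t2
  rw [vars_jsl_join]
  show (fun w => Gass w) '' ({0} ∪ {1} : Set ℕ) = _
  rw [Set.image_union, Set.image_singleton, Set.image_singleton, Set.singleton_union]
  simp [Gass]

-- pointwise comparisons
theorem hle1 : ∀ n, A3 n ≤ A1 n := by
  intro n; rcases n with _ | _ | _ | _ | n <;> simp [A3, A1, ptB]
theorem hle2 : ∀ n, A3 n ≤ A2 n := by
  intro n; rcases n with _ | _ | _ | _ | n <;> simp [A3, A2, ptB]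
theorem hle3 : ∀ n, A4 n ≤ B2 n := by
  intro n; rcases n with _ | _ | _ | _ | n <;> simp [A4, B2, ptB]
theorem hle4 : ∀ n, B4 n ≤ B1 n := by
  intro n; rcases n with _ | _ | _ | _ | n <;> simp [B4, B1, ptB]

section MainArg

variable (C : Composite BLTheory JSLTheory)

theorem ubind1 : uTm.bind (fun n => Tm.inL (sg1 n)) = CJ P01 P01 := by
  simp [uTm, P01, bind_CJ, bind_CP, sg1]

theorem ubind2 : uTm.bind (fun n => Tm.inL (sg2 n)) = CJ P01 (CP (.var 1) (.var 0)) := by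
  simp [uTm, P01, bind_CJ, bind_CP, sg2]

theorem ubind3 : uTm.bind (fun n => Tm.inL (sg3 n)) = CJ P01 (CP CBot CBot) := by
  simp [uTm, P01, bind_CJ, bind_CP, sg3]

theorem ubind4 : uTm.bind (fun n => Tm.inL (sg4 n)) = CJ (CP CBot CBot) P01 := by
  simp [uTm, P01, bind_CJ, bind_CP, sg4]

theorem ueq1 : Theory.Eq (CTh C) (uTm.bind (fun n => Tm.inL (sg1 n))) (sep t2 Tm.var) := by
  rw [ubind1, sep_t2]; exact cj_idem C P01

theorem ueq2 : Theory.Eq (CTh C) (uTm.bind (fun n => Tm.inL (sg2 n))) (sep t2 Tm.var) := by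
  rw [ubind2, sep_t2]
  exact .trans (congrCJ C (Theory.Eq.refl (Th := CTh C) P01) (cp_comm C (.var 1) (.var 0))) (cj_idem C P01)

theorem ueq3 : Theory.Eq (CTh C) (uTm.bind (fun n => Tm.inL (sg3 n))) (sep t2 Tm.var) := by
  rw [ubind3, sep_t2]
  exact .trans (congrCJ C (Theory.Eq.refl (Th := CTh C) P01) (cp_idem C CBot)) (cj_unitR C P01)

theorem ueq4 : Theory.Eq (CTh C) (uTm.bind (fun n => Tm.inL (sg4 n))) (sep t2 Tm.var) := by
  rw [ubind4, sep_t2]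
  exact .trans (congrCJ C (cp_idem C CBot) (Theory.Eq.refl (Th := CTh C) P01)) (cj_unitL C P01)

end MainArg

theorem no_composite_aux (C : Composite BLTheory JSLTheory) : False := by
  obtain ⟨X, t, s, hu⟩ := C.separation uTm
  -- the four composite equalities between separated terms
  have step : ∀ sg : ℕ → Tm BLSig ℕ,
      Theory.Eq (CTh C) (uTm.bind (fun n => Tm.inL (sg n))) (sep t2 Tm.var) →
      EqMod BLTheory JSLTheory t (fun w => (s w).bind sg) t2 Tm.var := by
    intro sg hsg
    have ha := eqBind hu (fun n => Tm.inL (sg n))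
    rw [sep_bind] at ha
    exact C.essentiallyUnique t _ t2 Tm.var (ha.symm.trans hsg)
  have em1 := step sg1 (ueq1 C)
  have em2 := step sg2 (ueq2 C)
  have em3 := step sg3 (ueq3 C)
  have em4 := step sg4 (ueq4 C)
  -- transfer to `Bool × Bool`
  have key : ∀ (sg : ℕ → Tm BLSig ℕ) (A B : ℕ → Bool),
      EqMod BLTheory JSLTheory t (fun w => (s w).bind sg) t2 Tm.var →
      ((fun n => evalBL Gass (sg n)) = fun n => (A n, B n)) →
      (fun w => (evalBL A (s w), evalBL B (s w))) '' t.vars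
        = {((true, false) : Bool × Bool), (false, true)} := by
    intro sg A B em hAB
    have h := transfer em Gass
    rw [himg_rhs] at h
    have hfun : (fun w => evalBL Gass ((s w).bind sg))
        = (fun w : X => (evalBL A (s w), evalBL B (s w))) := by
      funext w; rw [evalBL_bind, hAB, evalBL_prod]
    rw [← hfun]
    exact h
  have k1 := key sg1 A1 B1 em1 hG1
  have k2 := key sg2 A2 B2 em2 hG2
  have k3 := key sg3 A3 B3 em3 hG3
  have k4 := key sg4 A4 B4 em4 hG4
  -- pick the witness realizing `(true, false)` in the third constraint
  have hmem : ((true, false) : Bool × Bool)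
      ∈ ((fun w => (evalBL A3 (s w), evalBL B3 (s w))) '' t.vars : Set (Bool × Bool)) := by
    rw [k3]; simp
  obtain ⟨w₀, hw₀, hval⟩ := hmem
  have hq5 : evalBL A3 (s w₀) = true := congrArg Prod.fst hval
  -- membership facts for the other three constraints
  have hin : ∀ (A B : ℕ → Bool),
      (fun w => (evalBL A (s w), evalBL B (s w))) '' t.vars
        = {((true, false) : Bool × Bool), (false, true)} →
      (evalBL A (s w₀) = true ∧ evalBL B (s w₀) = false) ∨
      (evalBL A (s w₀) = false ∧ evalBL B (s w₀) = true) := by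
    intro A B hk
    have : (evalBL A (s w₀), evalBL B (s w₀))
        ∈ ({((true, false) : Bool × Bool), (false, true)} : Set (Bool × Bool)) := by
      rw [← hk]; exact Set.mem_image_of_mem _ hw₀
    simpa [Prod.ext_iff] using this
  have h1 := hin A1 B1 k1
  have h2 := hin A2 B2 k2
  have h4 := hin A4 B4 k4
  -- monotonicity
  have m1 := evalBL_mono hle1 (s w₀)
  have m2 := evalBL_mono hle2 (s w₀)
  have m3 := evalBL_mono hle3 (s w₀)
  have m4 := evalBL_mono hle4 (s w₀)
  rw [hq5] at m1 m2
  -- b1 = true hence b2 = false; b3 = true hence b4 = false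
  rcases h1 with ⟨e1, e2⟩ | ⟨e1, e2⟩
  · rcases h2 with ⟨e3, e4⟩ | ⟨e3, e4⟩
    · -- b4 = false and b2 = false force the fourth constraint to fail
      rw [e4] at m3
      rw [e2] at m4
      rcases h4 with ⟨e7, e8⟩ | ⟨e7, e8⟩
      · rw [e7] at m3; exact absurd m3 (by decide)
      · rw [e8] at m4; exact absurd m4 (by decide)
    · rw [e3] at m2; exact absurd m2 (by decide)
  · rw [e1] at m1; exact absurd m1 (by decide)

/-- There is no composite theory of the theory of join
semilattices (with bottom) after the theory of bounded lattices; equivalently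
(by Pirog–Staton), there is no distributive law `bL ∘ P ⇒ P ∘ bL` of the bounded
lattice monad over the finite powerset monad. -/
theorem no_composite_jsl_after_bounded_lattices :
    IsEmpty (Composite BLTheory JSLTheory) :=
  ⟨no_composite_aux⟩
end

section
/- There is no distributive law of type D ∘ D ⇒ D ∘ D of the finitely supported probability distribution monad over itself; equivalently, the theory of convex algebras (barycentric algebras) admits no composite with itself. -/
/-- The open unit interval, indexing the convex combination operations. -/
def I01 : Type := {p : ℝ // 0 < p ∧ p < 1}

/-- Signature of convex (barycentric) algebras: a binary operation `+ᵖ` for each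
`p ∈ (0,1)`. -/
def ConvSig : Sig := ⟨I01, fun _ => 2⟩

def Conv.add {X : Type} (p : I01) (t u : Tm ConvSig X) : Tm ConvSig X :=
  .op p fun i => if i.val = 0 then t else u

/-- Axioms of convex algebras: idempotence, skew-commutativity and skew-associativity. -/
inductive ConvAx : Tm ConvSig ℕ → Tm ConvSig ℕ → Prop
  | idem (p : I01) : ConvAx (Conv.add p (.var 0) (.var 0)) (.var 0)
  | comm (p q : I01) (h : q.val = 1 - p.val) :
      ConvAx (Conv.add p (.var 0) (.var 1)) (Conv.add q (.var 1) (.var 0))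
  | assoc (p r p' r' : I01)
      (h1 : p'.val = p.val / (p.val + (1 - p.val) * r.val))
      (h2 : r'.val = p.val + (1 - p.val) * r.val) :
      ConvAx (Conv.add p (.var 0) (Conv.add r (.var 1) (.var 2)))
             (Conv.add r' (Conv.add p' (.var 0) (.var 1)) (.var 2))

/-- The theory of convex (barycentric) algebras, presenting the finitely supported
probability distribution monad. -/
def ConvTheory : Theory := ⟨ConvSig, ConvAx⟩

/-! ### Auxiliary lemmas for the no-go theorem -/

namespace NoGo

theorem bind_var {σ : Sig} {X : Type} (t : Tm σ X) : t.bind .var = t := by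
  induction t with
  | var x => rfl
  | op g a ih => simp only [Tm.bind]; congr 1; funext i; exact ih i

theorem bind_bind {σ : Sig} {X Y Z : Type} (t : Tm σ X) (f : X → Tm σ Y) (g : Y → Tm σ Z) :
    (t.bind f).bind g = t.bind fun x => (f x).bind g := by
  induction t with
  | var x => rfl
  | op h a ih => simp only [Tm.bind]; congr 1; funext i; exact ih i

theorem eq_bind {Th : Theory} {X Y : Type} {a b : Tm Th.sig X} (h : Th.Eq a b)
    (f : X → Tm Th.sig Y) : Th.Eq (a.bind f) (b.bind f) := by
  induction h with
  | ax h g => rw [bind_bind, bind_bind]; exact .ax h _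
  | refl t => exact .refl _
  | symm _ ih => exact .symm ih
  | trans _ _ ih1 ih2 => exact .trans ih1 ih2
  | congr g _ ih => exact .congr g ih

theorem vars_bind {σ : Sig} {X Y : Type} (t : Tm σ X) (f : X → Tm σ Y) :
    (t.bind f).vars = ⋃ x ∈ t.vars, (f x).vars := by
  induction t with
  | var x => simp [Tm.bind, Tm.vars]
  | op g a ih =>
      simp only [Tm.bind, Tm.vars, ih]
      ext y
      simp only [Set.mem_iUnion]
      tauto

theorem vars_rename {σ : Sig} {X Y : Type} (t : Tm σ X) (f : X → Y) :
    (t.rename f).vars = f '' t.vars := by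
  rw [Tm.rename, vars_bind]
  ext y
  simp [Tm.vars, eq_comm]

theorem inL_bind {σ τ : Sig} {X Y : Type} (t : Tm σ X) (f : X → Tm σ Y) :
    Tm.inL (τ := τ) (t.bind f) = (Tm.inL t).bind fun x => Tm.inL (f x) := by
  induction t with
  | var x => rfl
  | op g a ih => simp only [Tm.bind, Tm.inL]; congr 1; funext i; exact ih i

theorem inR_bind {σ τ : Sig} {X Y : Type} (t : Tm τ X) (f : X → Tm τ Y) :
    Tm.inR (σ := σ) (t.bind f) = (Tm.inR t).bind fun x => Tm.inR (f x) := by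
  induction t with
  | var x => rfl
  | op g a ih => simp only [Tm.bind, Tm.inR]; congr 1; funext i; exact ih i

theorem inL_rename {σ τ : Sig} {X Y : Type} (t : Tm σ X) (f : X → Y) :
    Tm.inL (τ := τ) (t.rename f) = (Tm.inL t).rename f := by
  rw [Tm.rename, Tm.rename, inL_bind]
  rfl

theorem sep_rename {σ τ : Sig} {X : Type} (t : Tm τ X) (s : X → Tm σ ℕ) (f : ℕ → ℕ) :
    (sep t s).rename f = sep t fun x => (s x).rename f := by
  unfold sep
  rw [Tm.rename, bind_bind]
  congr 1
  funext x
  rw [show ((Tm.inL (s x)).bind fun y => Tm.var (f y)) = (Tm.inL (s x)).rename f from rfl,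
    ← inL_rename]

theorem vars_add {X : Type} (p : I01) (a b : Tm ConvSig X) :
    (Conv.add p a b).vars = a.vars ∪ b.vars := by
  ext x
  simp only [Conv.add, Tm.vars, Set.mem_iUnion, Set.mem_union]
  constructor
  · rintro ⟨i, hi⟩
    by_cases h : i.val = 0
    · rw [if_pos h] at hi; exact Or.inl hi
    · rw [if_neg h] at hi; exact Or.inr hi
  · rintro (h | h)
    · refine ⟨⟨0, by show _ < 2; norm_num⟩, ?_⟩
      simpa using h
    · refine ⟨⟨1, by show _ < 2; norm_num⟩, ?_⟩
      simpa using h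

theorem convAx_vars {l r : Tm ConvSig ℕ} (h : ConvAx l r) : l.vars = r.vars := by
  cases h with
  | idem p => rw [vars_add]; simp [Tm.vars]
  | comm p q h => rw [vars_add, vars_add]; exact Set.union_comm _ _
  | assoc p r p' r' h1 h2 =>
      rw [vars_add, vars_add, vars_add, vars_add]; exact (Set.union_assoc _ _ _).symm

theorem convEq_vars {X : Type} {a b : Tm ConvSig X} (h : ConvTheory.Eq a b) :
    a.vars = b.vars := by
  have key : ∀ {X : Type} {a b : Tm ConvTheory.sig X}, ConvTheory.Eq a b → a.vars = b.vars := by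
    intro X a b h
    induction h with
    | ax h f => erw [vars_bind, vars_bind, convAx_vars h]; rfl
    | refl t => rfl
    | symm _ ih => exact ih.symm
    | trans _ _ ih1 ih2 => exact ih1.trans ih2
    | congr g _ ih => simp only [Tm.vars]; exact Set.iUnion_congr ih
  exact key h

theorem vars_var {σ : Sig} {X : Type} (x : X) : (Tm.var x : Tm σ X).vars = {x} := rfl

theorem inL_var {σ τ : Sig} {X : Type} (x : X) :
    Tm.inL (σ := σ) (τ := τ) (Tm.var x) = Tm.var x := rfl

theorem inR_var {σ τ : Sig} {X : Type} (x : X) :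
    Tm.inR (σ := σ) (τ := τ) (Tm.var x) = Tm.var x := rfl

noncomputable def half : I01 := ⟨1/2, by norm_num⟩

/-- Binary node in the sum signature with the left (outer `S`) operation. -/
noncomputable def ndL {X : Type} (p : I01) (a b : Tm (ConvSig.sum ConvSig) X) :
    Tm (ConvSig.sum ConvSig) X :=
  .op (Sum.inl p) fun i => if i.val = 0 then a else b

/-- Binary node in the sum signature with the right (inner `T`) operation. -/
noncomputable def ndR {X : Type} (p : I01) (a b : Tm (ConvSig.sum ConvSig) X) :
    Tm (ConvSig.sum ConvSig) X :=
  .op (Sum.inr p) fun i => if i.val = 0 then a else b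

theorem inL_add {X : Type} (p : I01) (a b : Tm ConvSig X) :
    Tm.inL (τ := ConvSig) (Conv.add p a b) = ndL p a.inL b.inL := by
  simp only [Conv.add, Tm.inL, ndL]
  congr 1
  funext i
  by_cases h : i.val = 0 <;> simp [h]

theorem inR_add {X : Type} (p : I01) (a b : Tm ConvSig X) :
    Tm.inR (σ := ConvSig) (Conv.add p a b) = ndR p a.inR b.inR := by
  simp only [Conv.add, Tm.inR, ndR]
  congr 1
  funext i
  by_cases h : i.val = 0 <;> simp [h]

theorem ndL_bind {X Y : Type} (p : I01) (a b : Tm (ConvSig.sum ConvSig) X)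
    (f : X → Tm (ConvSig.sum ConvSig) Y) :
    (ndL p a b).bind f = ndL p (a.bind f) (b.bind f) := by
  simp only [ndL, Tm.bind]
  congr 1
  funext i
  by_cases h : i.val = 0 <;> simp [h]

theorem ndR_bind {X Y : Type} (p : I01) (a b : Tm (ConvSig.sum ConvSig) X)
    (f : X → Tm (ConvSig.sum ConvSig) Y) :
    (ndR p a b).bind f = ndR p (a.bind f) (b.bind f) := by
  simp only [ndR, Tm.bind]
  congr 1
  funext i
  by_cases h : i.val = 0 <;> simp [h]

section WithComposite

variable (C : Composite ConvTheory ConvTheory)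

theorem E_congrL {X : Type} (p : I01) {a a' b b' : Tm (ConvSig.sum ConvSig) X}
    (ha : C.theory.Eq a a') (hb : C.theory.Eq b b') :
    C.theory.Eq (ndL p a b) (ndL p a' b') := by
  refine Theory.Eq.congr (Th := C.theory) (Sum.inl p) (fun i => ?_)
  by_cases h : i.val = 0
  · simp only [if_pos h]; exact ha
  · simp only [if_neg h]; exact hb

theorem E_congrR {X : Type} (p : I01) {a a' b b' : Tm (ConvSig.sum ConvSig) X}
    (ha : C.theory.Eq a a') (hb : C.theory.Eq b b') :
    C.theory.Eq (ndR p a b) (ndR p a' b') := by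
  refine Theory.Eq.congr (Th := C.theory) (Sum.inr p) (fun i => ?_)
  by_cases h : i.val = 0
  · simp only [if_pos h]; exact ha
  · simp only [if_neg h]; exact hb

theorem conv_idem : ConvTheory.Eq (X := ℕ) (Conv.add half (.var 0) (.var 0)) (.var 0) := by
  have h := Theory.Eq.ax (Th := ConvTheory) (ConvAx.idem half) Tm.var
  erw [bind_var, bind_var] at h; assumption

theorem conv_comm : ConvTheory.Eq (X := ℕ)
    (Conv.add half (.var 0) (.var 1)) (Conv.add half (.var 1) (.var 0)) := by
  have h := Theory.Eq.ax (Th := ConvTheory)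
    (ConvAx.comm half half (by show (1:ℝ)/2 = 1 - 1/2; norm_num)) Tm.var
  erw [bind_var, bind_var] at h; assumption

theorem E_idemL (a : Tm (ConvSig.sum ConvSig) ℕ) :
    C.theory.Eq (ndL half a a) a := by
  have h1 := C.containsS _ _ conv_idem
  have h2 := eq_bind (Th := C.theory) h1 (fun _ => a)
  erw [inL_add] at h2
  simp only [inL_var] at h2
  erw [ndL_bind] at h2
  simpa only [Tm.bind] using h2

theorem E_idemR (a : Tm (ConvSig.sum ConvSig) ℕ) :
    C.theory.Eq (ndR half a a) a := by
  have h1 := C.containsT _ _ conv_idem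
  have h2 := eq_bind (Th := C.theory) h1 (fun _ => a)
  erw [inR_add] at h2
  simp only [inR_var] at h2
  erw [ndR_bind] at h2
  simpa only [Tm.bind] using h2

theorem E_commR (a b : Tm (ConvSig.sum ConvSig) ℕ) :
    C.theory.Eq (ndR half a b) (ndR half b a) := by
  have h1 := C.containsT _ _ conv_comm
  have h2 := eq_bind (Th := C.theory) h1 (fun n => if n = 0 then a else b)
  erw [inR_add, inR_add] at h2
  simp only [inR_var] at h2
  erw [ndR_bind, ndR_bind] at h2
  simp only [Tm.bind] at h2; exact h2

end WithComposite

/-- The inner `T`-term `x +½ y`. -/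
noncomputable def tA : Tm ConvSig ℕ := Conv.add half (.var 0) (.var 1)

/-- The problematic mixed term `(x ⊕ y) ⊞ (z ⊕ w)`. -/
noncomputable def uu : Tm (ConvSig.sum ConvSig) ℕ :=
  ndL half (ndR half (.var 0) (.var 1)) (ndR half (.var 2) (.var 3))

def r1 : ℕ → ℕ := fun n => if n = 2 then 0 else if n = 3 then 1 else n
def r2 : ℕ → ℕ := fun n => if n = 1 then 0 else if n = 3 then 2 else n
def r3 : ℕ → ℕ := fun n => if n = 2 then 1 else if n = 3 then 0 else n

theorem sepA : sep tA Tm.var = ndR half (.var 0) (.var 1) := by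
  unfold sep tA
  rw [inR_add]
  simp only [inR_var]
  rw [ndR_bind]
  simp only [Tm.bind, inL_var]

theorem sepB : sep (Tm.var () : Tm ConvSig Unit)
    (fun _ => Conv.add half (.var 0) (.var 2)) = ndL half (.var 0) (.var 2) := by
  unfold sep
  show Tm.inL (Conv.add half (.var 0) (.var 2)) = _
  rw [inL_add]
  simp only [inL_var]

theorem uu_r1 : uu.rename r1 = ndL half (ndR half (.var 0) (.var 1)) (ndR half (.var 0) (.var 1)) := by
  unfold uu Tm.rename
  rw [ndL_bind, ndR_bind, ndR_bind]
  simp only [Tm.bind, r1]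
  norm_num

theorem uu_r2 : uu.rename r2 = ndL half (ndR half (.var 0) (.var 0)) (ndR half (.var 2) (.var 2)) := by
  unfold uu Tm.rename
  rw [ndL_bind, ndR_bind, ndR_bind]
  simp only [Tm.bind, r2]
  norm_num

theorem uu_r3 : uu.rename r3 = ndL half (ndR half (.var 0) (.var 1)) (ndR half (.var 1) (.var 0)) := by
  unfold uu Tm.rename
  rw [ndL_bind, ndR_bind, ndR_bind]
  simp only [Tm.bind, r3]
  norm_num

/-- The core of the no-go argument (Plotkin's counterexample). -/
theorem main (C : Composite ConvTheory ConvTheory) : False := by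
  obtain ⟨X, t, s, hu⟩ := C.separation uu
  have hren : ∀ f : ℕ → ℕ, C.theory.Eq (uu.rename f) (sep t fun x => (s x).rename f) := by
    intro f
    have h := eq_bind (Th := C.theory) hu (fun n => .var (f n))
    erw [show ((sep t s).bind fun n => Tm.var (f n)) = (sep t s).rename f from rfl,
      sep_rename] at h
    exact h
  have htAv : tA.vars = ({0} ∪ {1} : Set ℕ) := by
    show (Conv.add half (.var 0) (.var 1)).vars = _
    rw [vars_add, vars_var, vars_var]
  -- Step A : rename 2 ↦ 0, 3 ↦ 1
  have hA : C.theory.Eq (sep tA Tm.var) (sep t fun x => (s x).rename r1) := by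
    refine Theory.Eq.trans ?_ (hren r1)
    erw [sepA, uu_r1]
    exact Theory.Eq.symm (E_idemL C _)
  obtain ⟨Y1, f1, g1, sb1, hT1, hv1, hs1⟩ := C.essentiallyUnique _ _ _ _ hA
  have hmem : f1 0 ∈ (t.rename g1).vars := by
    erw [← convEq_vars hT1, vars_rename, htAv]
    exact ⟨0, Or.inl rfl, rfl⟩
  rw [vars_rename] at hmem
  obtain ⟨a, ha, hfa⟩ := hmem
  have hEa : ConvTheory.Eq ((s a).rename r1) (Tm.var 0) := by
    have h1 := hs1 a
    rw [hfa] at h1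
    exact h1.trans (Theory.Eq.symm (hv1 0))
  have Hr1 : r1 '' (s a).vars = {0} := by
    have h := convEq_vars hEa
    erw [vars_rename, vars_var] at h; assumption
  -- Step B : rename 1 ↦ 0, 3 ↦ 2
  have hB : C.theory.Eq
      (sep (Tm.var () : Tm ConvSig Unit) (fun _ => Conv.add half (.var 0) (.var 2)))
      (sep t fun x => (s x).rename r2) := by
    refine Theory.Eq.trans ?_ (hren r2)
    erw [sepB, uu_r2]
    exact Theory.Eq.symm (E_congrL C half (E_idemR C _) (E_idemR C _))
  obtain ⟨Y2, f2, g2, sb2, hT2, hv2, hs2⟩ := C.essentiallyUnique _ _ _ _ hB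
  have hg2 : g2 a = f2 () := by
    have h := convEq_vars hT2
    erw [vars_rename, vars_rename] at h
    have hm : g2 a ∈ f2 '' (Tm.var () : Tm ConvSig Unit).vars := by
      rw [h]; exact ⟨a, ha, rfl⟩
    obtain ⟨u, _, he⟩ := hm
    exact he.symm
  have hEb : ConvTheory.Eq ((s a).rename r2) (Conv.add half (.var 0) (.var 2)) := by
    have h1 := hs2 a
    rw [hg2] at h1
    exact h1.trans (Theory.Eq.symm (hv2 ()))
  have Hr2 : r2 '' (s a).vars = ({0} ∪ {2} : Set ℕ) := by
    have h := convEq_vars hEb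
    erw [vars_rename, vars_add, vars_var, vars_var] at h; assumption
  -- the variables of `s a` lie in {0, 2} and contain both 0 and 2
  have hsub : ∀ n ∈ (s a).vars, n = 0 ∨ n = 2 := by
    intro n hn
    have hm : r1 n ∈ ({0} : Set ℕ) := by rw [← Hr1]; exact ⟨n, hn, rfl⟩
    have h0 : r1 n = 0 := hm
    unfold r1 at h0
    split_ifs at h0 with h h'
    · exact Or.inr h
    · exact Or.inl h0
  have h2mem : (2:ℕ) ∈ (s a).vars := by
    have hm : (2:ℕ) ∈ r2 '' (s a).vars := by rw [Hr2]; exact Or.inr rfl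
    obtain ⟨m, hmm, hm2⟩ := hm
    rcases hsub m hmm with h | h
    · rw [h] at hm2; norm_num [r2] at hm2
    · rwa [h] at hmm
  have h0mem : (0:ℕ) ∈ (s a).vars := by
    have hm : (0:ℕ) ∈ r2 '' (s a).vars := by rw [Hr2]; exact Or.inl rfl
    obtain ⟨m, hmm, hm2⟩ := hm
    rcases hsub m hmm with h | h
    · rwa [h] at hmm
    · rw [h] at hm2; norm_num [r2] at hm2
  -- Step C : rename 2 ↦ 1, 3 ↦ 0
  have hC : C.theory.Eq (sep tA Tm.var) (sep t fun x => (s x).rename r3) := by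
    refine Theory.Eq.trans ?_ (hren r3)
    erw [sepA, uu_r3]
    exact Theory.Eq.symm
      (Theory.Eq.trans (E_congrL C half (Theory.Eq.refl _) (E_commR C _ _)) (E_idemL C _))
  obtain ⟨Y3, f3, g3, sb3, hT3, hv3, hs3⟩ := C.essentiallyUnique _ _ _ _ hC
  have hmem3 : g3 a ∈ f3 '' tA.vars := by
    erw [← vars_rename, convEq_vars hT3, vars_rename]
    exact ⟨a, ha, rfl⟩
  rw [htAv] at hmem3
  obtain ⟨k, _, he3⟩ := hmem3
  have hEc : ConvTheory.Eq ((s a).rename r3) (Tm.var k) := by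
    have h1 := hs3 a
    have h2 := hv3 k
    rw [he3] at h2
    exact h1.trans (Theory.Eq.symm h2)
  have Hr3 : r3 '' (s a).vars = {k} := by
    have h := convEq_vars hEc
    erw [vars_rename, vars_var] at h; assumption
  have e0 : (0:ℕ) ∈ ({k} : Set ℕ) := by
    rw [← Hr3]; exact ⟨0, h0mem, by norm_num [r3]⟩
  have e1 : (1:ℕ) ∈ ({k} : Set ℕ) := by
    rw [← Hr3]; exact ⟨2, h2mem, by norm_num [r3]⟩
  have hk0 : (0:ℕ) = k := e0
  have hk1 : (1:ℕ) = k := e1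
  omega

end NoGo

/-- The theory of convex algebras admits no composite with
itself; equivalently (by Pirog–Staton), there is no distributive law
`D ∘ D ⇒ D ∘ D` of the distribution monad over itself. -/
theorem no_composite_convex_after_convex :
    IsEmpty (Composite ConvTheory ConvTheory) :=
  ⟨NoGo.main⟩
end

section
/- For the monads M (multiset) and L (list), there is no distributive law of type L ∘ (M∘L) ⇒ (M∘L) ∘ L, where M∘L is the composite monad (presented by the theory with constants 0, 1, binary +, * such that 0 is the unit of the associative commutative +, 1 is the unit of the associative *, 0 is a two-sided multiplicative zero for *, and * distributes over + on both sides). -/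
/-- Operations of the theory of monoids. -/
inductive MonOp : Type | e | mul

/-- Signature of monoids: a constant and a binary operation. -/
def MonSig : Sig := ⟨MonOp, fun o => match o with | .e => 0 | .mul => 2⟩

def Mon.one {X : Type} : Tm MonSig X := .op .e Fin.elim0
def Mon.mul {X : Type} (t u : Tm MonSig X) : Tm MonSig X :=
  .op .mul fun i => if i.val = 0 then t else u

/-- Axioms of monoids: unit laws and associativity. -/
inductive MonAx : Tm MonSig ℕ → Tm MonSig ℕ → Prop
  | unitL : MonAx (Mon.mul Mon.one (.var 0)) (.var 0)
  | unitR : MonAx (Mon.mul (.var 0) Mon.one) (.var 0)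
  | assoc : MonAx (Mon.mul (Mon.mul (.var 0) (.var 1)) (.var 2))
                  (Mon.mul (.var 0) (Mon.mul (.var 1) (.var 2)))

/-- The algebraic theory of monoids, presenting the list monad. -/
def MonTheory : Theory := ⟨MonSig, MonAx⟩

/-- Operations of the theory presenting the composite monad `M ∘ L`. -/
inductive MLOp : Type | zero | one | add | mul

/-- Signature of the theory presenting `M ∘ L`. -/
def MLSig : Sig :=
  ⟨MLOp, fun o => match o with | .zero => 0 | .one => 0 | .add => 2 | .mul => 2⟩

def ML.zero {X : Type} : Tm MLSig X := .op .zero Fin.elim0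
def ML.one {X : Type} : Tm MLSig X := .op .one Fin.elim0
def ML.add {X : Type} (t u : Tm MLSig X) : Tm MLSig X :=
  .op .add fun i => if i.val = 0 then t else u
def ML.mul {X : Type} (t u : Tm MLSig X) : Tm MLSig X :=
  .op .mul fun i => if i.val = 0 then t else u

/-- Axioms of the theory presenting `M ∘ L`: `0` is the unit of the associative
commutative `+`, `1` is the unit of the associative `*`, `0` is a two-sided
multiplicative zero, and `*` distributes over `+` on both sides. -/
inductive MLAx : Tm MLSig ℕ → Tm MLSig ℕ → Prop
  | addUnitL : MLAx (ML.add ML.zero (.var 0)) (.var 0)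
  | addUnitR : MLAx (ML.add (.var 0) ML.zero) (.var 0)
  | addAssoc : MLAx (ML.add (ML.add (.var 0) (.var 1)) (.var 2))
                    (ML.add (.var 0) (ML.add (.var 1) (.var 2)))
  | addComm : MLAx (ML.add (.var 0) (.var 1)) (ML.add (.var 1) (.var 0))
  | mulUnitL : MLAx (ML.mul ML.one (.var 0)) (.var 0)
  | mulUnitR : MLAx (ML.mul (.var 0) ML.one) (.var 0)
  | mulAssoc : MLAx (ML.mul (ML.mul (.var 0) (.var 1)) (.var 2))
                    (ML.mul (.var 0) (ML.mul (.var 1) (.var 2)))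
  | zeroL : MLAx (ML.mul ML.zero (.var 0)) ML.zero
  | zeroR : MLAx (ML.mul (.var 0) ML.zero) ML.zero
  | distL : MLAx (ML.mul (.var 0) (ML.add (.var 1) (.var 2)))
                 (ML.add (ML.mul (.var 0) (.var 1)) (ML.mul (.var 0) (.var 2)))
  | distR : MLAx (ML.mul (ML.add (.var 0) (.var 1)) (.var 2))
                 (ML.add (ML.mul (.var 0) (.var 2)) (ML.mul (.var 1) (.var 2)))

/-- The theory presenting the composite monad `M ∘ L` (multiset after list). -/
def MLTheory : Theory := ⟨MLSig, MLAx⟩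


/-! ### Auxiliary lemmas -/

namespace NoGoAux

theorem bind_assoc {σ : Sig} {X Y Z : Type} (t : Tm σ X) (f : X → Tm σ Y) (g : Y → Tm σ Z) :
    (t.bind f).bind g = t.bind (fun x => (f x).bind g) := by
  induction t with
  | var x => rfl
  | op o k ih => simp only [Tm.bind]; congr 1; funext i; exact ih i

theorem bind_var {σ : Sig} {X : Type} (t : Tm σ X) : t.bind Tm.var = t := by
  induction t with
  | var x => rfl
  | op o k ih => simp only [Tm.bind]; congr 1; funext i; exact ih i

theorem eqBind {Th : Theory} {X : Type} {a b : Tm Th.sig X} (h : Th.Eq a b) :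
    ∀ {Y : Type} (f : X → Tm Th.sig Y), Th.Eq (a.bind f) (b.bind f) := by
  induction h with
  | ax hax g => intro Y f; rw [bind_assoc, bind_assoc]; exact Theory.Eq.ax hax _
  | refl t => intro Y f; exact .refl _
  | symm _ ih => intro Y f; exact .symm (ih f)
  | trans _ _ ih1 ih2 => intro Y f; exact .trans (ih1 f) (ih2 f)
  | congr g _ ih => intro Y f; exact Theory.Eq.congr g (fun i => ih i f)

theorem op0_congr {σ : Sig} {X : Type} {o : σ.ops} (h : σ.ar o = 0)
    (k k' : Fin (σ.ar o) → Tm σ X) : Tm.op o k = Tm.op o k' := by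
  congr 1; funext i; exact absurd i.isLt (by omega)

theorem inL_bind {σ τ : Sig} {X Y : Type} (s : Tm σ X) (g : X → Tm σ Y) :
    (Tm.inL (τ := τ) s).bind (fun x => Tm.inL (g x)) = Tm.inL (s.bind g) := by
  induction s with
  | var x => rfl
  | op o k ih => simp only [Tm.inL, Tm.bind]; congr 1; funext i; exact ih i

theorem sep_bind {σ τ : Sig} {X : Type} (t : Tm τ X) (s : X → Tm σ ℕ) (g : ℕ → Tm σ ℕ) :
    (sep t s).bind (fun n => Tm.inL (g n)) = sep t (fun x => (s x).bind g) := by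
  unfold sep; rw [bind_assoc]; congr 1; funext x; exact inL_bind _ _

theorem fin2 (i : Fin 2) : i = 0 ∨ i = 1 := by
  rcases i with ⟨iv, hlt⟩
  interval_cases iv
  · exact Or.inl rfl
  · exact Or.inr rfl

end NoGoAux
namespace NoGoAux

/-- Multiplication of multisets of words (free semiring multiplication). -/
def mulM {Y : Type} (a b : Multiset (List Y)) : Multiset (List Y) :=
  a.bind fun w => b.map (w ++ ·)

theorem mulM_card {Y : Type} (a b : Multiset (List Y)) :
    Multiset.card (mulM a b) = Multiset.card a * Multiset.card b := by
  simp [mulM, Multiset.card_bind, Multiset.card_map, Multiset.map_const',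
    Multiset.sum_replicate, smul_eq_mul]

theorem mulM_singleton {Y : Type} (w w' : List Y) :
    mulM {w} {w'} = ({w ++ w'} : Multiset (List Y)) := by
  simp [mulM]

theorem mulM_one_left {Y : Type} (b : Multiset (List Y)) : mulM {[]} b = b := by
  simp [mulM]

theorem mulM_one_right {Y : Type} (a : Multiset (List Y)) : mulM a {[]} = a := by
  unfold mulM
  simp only [Multiset.map_singleton, List.append_nil]
  exact (Multiset.bind_singleton (s := a) id).trans (Multiset.map_id a)

theorem mulM_zero_left {Y : Type} (b : Multiset (List Y)) : mulM 0 b = 0 := by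
  simp [mulM]

theorem mulM_zero_right {Y : Type} (a : Multiset (List Y)) : mulM a 0 = 0 := by
  simp [mulM]

theorem mulM_assoc {Y : Type} (a b c : Multiset (List Y)) :
    mulM (mulM a b) c = mulM a (mulM b c) := by
  unfold mulM
  rw [Multiset.bind_assoc]
  congr 1; funext w
  rw [Multiset.bind_map, Multiset.map_bind]
  congr 1; funext u
  simp [Multiset.map_map, Function.comp_def, List.append_assoc]

theorem mulM_add_left {Y : Type} (a b c : Multiset (List Y)) :
    mulM a (b + c) = mulM a b + mulM a c := by
  simp [mulM, Multiset.map_add, Multiset.bind_add]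

theorem mulM_add_right {Y : Type} (a b c : Multiset (List Y)) :
    mulM (a + b) c = mulM a c + mulM b c := by
  simp [mulM, Multiset.add_bind]

end NoGoAux
namespace NoGoAux

/-- Interpretation of the `ML` operations on multisets of words. -/
def opSem {Y : Type} : (g : MLOp) → (Fin (MLSig.ar g) → Multiset (List Y)) → Multiset (List Y)
  | .zero, _ => 0
  | .one, _ => {[]}
  | .add, r => r ⟨0, by decide⟩ + r ⟨1, by decide⟩
  | .mul, r => mulM (r ⟨0, by decide⟩) (r ⟨1, by decide⟩)

/-- Evaluation of `ML` terms in the free semiring of multisets of words. -/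
def evalM {X Y : Type} (v : X → Multiset (List Y)) : Tm MLSig X → Multiset (List Y)
  | .var x => v x
  | .op g k => opSem g (fun i => evalM v (k i))

theorem evalM_var {X Y : Type} (v : X → Multiset (List Y)) (x : X) :
    evalM v (.var x) = v x := rfl

theorem evalM_op {X Y : Type} (v : X → Multiset (List Y)) (g : MLOp)
    (k : Fin (MLSig.ar g) → Tm MLSig X) :
    evalM v (.op g k) = opSem g (fun i => evalM v (k i)) := rfl

theorem evalM_zero {X Y : Type} (v : X → Multiset (List Y))
    (k : Fin (MLSig.ar .zero) → Tm MLSig X) :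
    evalM v (.op .zero k) = 0 := rfl

theorem evalM_one {X Y : Type} (v : X → Multiset (List Y))
    (k : Fin (MLSig.ar .one) → Tm MLSig X) :
    evalM v (.op .one k) = {[]} := rfl

theorem evalM_mlzero {X Y : Type} (v : X → Multiset (List Y)) :
    evalM v ML.zero = 0 := rfl

theorem evalM_mlone {X Y : Type} (v : X → Multiset (List Y)) :
    evalM v ML.one = {[]} := rfl

theorem evalM_add {X Y : Type} (v : X → Multiset (List Y)) (a b : Tm MLSig X) :
    evalM v (ML.add a b) = evalM v a + evalM v b := rfl

theorem evalM_mul {X Y : Type} (v : X → Multiset (List Y)) (a b : Tm MLSig X) :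
    evalM v (ML.mul a b) = mulM (evalM v a) (evalM v b) := rfl

theorem evalM_bind {X X' Y : Type} (v : X' → Multiset (List Y)) (t : Tm MLSig X)
    (f : X → Tm MLSig X') :
    evalM v (t.bind f) = evalM (fun x => evalM v (f x)) t := by
  induction t with
  | var x => rfl
  | op g k ih =>
    cases g with
    | zero => rfl
    | one => rfl
    | add => exact congrArg₂ (· + ·) (ih ⟨0, by decide⟩) (ih ⟨1, by decide⟩)
    | mul => exact congrArg₂ mulM (ih ⟨0, by decide⟩) (ih ⟨1, by decide⟩)

theorem evalM_rename {X X' Y : Type} (v : X' → Multiset (List Y)) (t : Tm MLSig X)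
    (f : X → X') :
    evalM v (t.rename f) = evalM (fun x => v (f x)) t :=
  evalM_bind v t _

/-- Soundness of the multiset-of-words semantics for the `ML` theory. -/
theorem ml_sound {X : Type} {a b : Tm MLTheory.sig X} (h : MLTheory.Eq a b) :
    ∀ {Y : Type} (v : X → Multiset (List Y)), evalM v a = evalM v b := by
  induction h with
  | ax hax f =>
    intro Y v
    erw [evalM_bind, evalM_bind]
    cases hax with
    | addUnitL => simp [evalM_add, evalM_mlzero, evalM_var]
    | addUnitR => simp [evalM_add, evalM_mlzero, evalM_var]
    | addAssoc => simp [evalM_add, evalM_var, add_assoc]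
    | addComm => simp [evalM_add, evalM_var, add_comm]
    | mulUnitL => simp [evalM_mul, evalM_mlone, evalM_var, mulM_one_left]
    | mulUnitR => simp [evalM_mul, evalM_mlone, evalM_var, mulM_one_right]
    | mulAssoc => simp [evalM_mul, evalM_var, mulM_assoc]
    | zeroL => simp [evalM_mul, evalM_mlzero, evalM_var, mulM_zero_left]
    | zeroR => simp [evalM_mul, evalM_mlzero, evalM_var, mulM_zero_right]
    | distL => simp [evalM_mul, evalM_add, evalM_var, mulM_add_left]
    | distR => simp [evalM_mul, evalM_add, evalM_var, mulM_add_right]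
  | refl t => intro Y v; rfl
  | symm _ ih => intro Y v; exact (ih v).symm
  | trans _ _ ih1 ih2 => intro Y v; exact (ih1 v).trans (ih2 v)
  | congr g h ih =>
    intro Y v
    cases g with
    | zero => rfl
    | one => rfl
    | add => exact congrArg₂ (· + ·) (ih ⟨0, by decide⟩ v) (ih ⟨1, by decide⟩ v)
    | mul => exact congrArg₂ mulM (ih ⟨0, by decide⟩ v) (ih ⟨1, by decide⟩ v)

end NoGoAux
namespace NoGoAux

theorem bind_addML {X Y : Type} (a b : Tm MLSig X) (f : X → Tm MLSig Y) :
    (ML.add a b).bind f = ML.add (a.bind f) (b.bind f) := by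
  unfold ML.add
  simp only [Tm.bind]
  congr 1
  funext i
  exact apply_ite (fun t => Tm.bind t f) _ a b

theorem bind_mulML {X Y : Type} (a b : Tm MLSig X) (f : X → Tm MLSig Y) :
    (ML.mul a b).bind f = ML.mul (a.bind f) (b.bind f) := by
  unfold ML.mul
  simp only [Tm.bind]
  congr 1
  funext i
  exact apply_ite (fun t => Tm.bind t f) _ a b

theorem bind_zeroML {X Y : Type} (f : X → Tm MLSig Y) :
    (ML.zero : Tm MLSig X).bind f = ML.zero := by
  unfold ML.zero
  simp only [Tm.bind]
  exact op0_congr rfl _ _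

theorem bind_oneML {X Y : Type} (f : X → Tm MLSig Y) :
    (ML.one : Tm MLSig X).bind f = ML.one := by
  unfold ML.one
  simp only [Tm.bind]
  exact op0_congr rfl _ _

theorem eqAddML {X : Type} {a a' b b' : Tm MLSig X}
    (h1 : MLTheory.Eq a a') (h2 : MLTheory.Eq b b') :
    MLTheory.Eq (ML.add a b) (ML.add a' b') := by
  refine Theory.Eq.congr (Th := MLTheory) MLOp.add (fun i => ?_)
  rcases fin2 i with h | h <;> subst h <;> simpa

theorem eqMulML {X : Type} {a a' b b' : Tm MLSig X}
    (h1 : MLTheory.Eq a a') (h2 : MLTheory.Eq b b') :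
    MLTheory.Eq (ML.mul a b) (ML.mul a' b') := by
  refine Theory.Eq.congr (Th := MLTheory) MLOp.mul (fun i => ?_)
  rcases fin2 i with h | h <;> subst h <;> simpa

theorem op_add_eq {X : Type} (k : Fin (MLSig.ar .add) → Tm MLSig X) :
    Tm.op MLOp.add k = ML.add (k ⟨0, by decide⟩) (k ⟨1, by decide⟩) := by
  unfold ML.add
  congr 1
  funext i
  rcases fin2 i with h | h <;> subst h <;> simp <;> rfl

theorem op_mul_eq {X : Type} (k : Fin (MLSig.ar .mul) → Tm MLSig X) :
    Tm.op MLOp.mul k = ML.mul (k ⟨0, by decide⟩) (k ⟨1, by decide⟩) := by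
  unfold ML.mul
  congr 1
  funext i
  rcases fin2 i with h | h <;> subst h <;> simp <;> rfl

theorem addUnitL_inst {X : Type} (a : Tm MLSig X) :
    MLTheory.Eq (ML.add ML.zero a) a := by
  have h := Theory.Eq.ax (Th := MLTheory) MLAx.addUnitL (fun _ => a)
  erw [bind_addML, bind_zeroML] at h
  exact h

theorem addUnitR_inst {X : Type} (a : Tm MLSig X) :
    MLTheory.Eq (ML.add a ML.zero) a := by
  have h := Theory.Eq.ax (Th := MLTheory) MLAx.addUnitR (fun _ => a)
  erw [bind_addML, bind_zeroML] at h
  exact h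

theorem mulUnitL_inst {X : Type} (a : Tm MLSig X) :
    MLTheory.Eq (ML.mul ML.one a) a := by
  have h := Theory.Eq.ax (Th := MLTheory) MLAx.mulUnitL (fun _ => a)
  erw [bind_mulML, bind_oneML] at h
  exact h

theorem zeroL_inst {X : Type} (a : Tm MLSig X) :
    MLTheory.Eq (ML.mul ML.zero a) ML.zero := by
  have h := Theory.Eq.ax (Th := MLTheory) MLAx.zeroL (fun _ => a)
  erw [bind_mulML, bind_zeroML] at h
  exact h

theorem zeroR_inst {X : Type} (a : Tm MLSig X) :
    MLTheory.Eq (ML.mul a ML.zero) ML.zero := by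
  have h := Theory.Eq.ax (Th := MLTheory) MLAx.zeroR (fun _ => a)
  erw [bind_mulML, bind_zeroML] at h
  exact h

/-- If a term evaluates to the zero multiset (under a valuation with nonzero
values), it is provably equal to `0`. -/
theorem eval_zero_imp {X Y : Type} (v : X → Multiset (List Y)) (hv : ∀ x, v x ≠ 0) :
    ∀ t : Tm MLSig X, evalM v t = 0 → MLTheory.Eq t ML.zero := by
  intro t
  induction t with
  | var x => intro h; exact absurd h (hv x)
  | op g k ih =>
    cases g with
    | zero =>
      intro _
      rw [show Tm.op MLOp.zero k = ML.zero from op0_congr rfl _ _]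
      exact Theory.Eq.refl _
    | one =>
      intro h
      exact absurd h (by simp [evalM_one])
    | add =>
      intro h
      have h' : evalM v (k ⟨0, by decide⟩) + evalM v (k ⟨1, by decide⟩) = 0 := h
      have hc := congrArg Multiset.card h'
      rw [Multiset.card_add] at hc
      simp only [Multiset.card_zero] at hc
      have h0 : evalM v (k ⟨0, by decide⟩) = 0 :=
        Multiset.card_eq_zero.mp (by omega)
      have h1 : evalM v (k ⟨1, by decide⟩) = 0 :=
        Multiset.card_eq_zero.mp (by omega)
      rw [op_add_eq]
      exact (eqAddML (ih _ h0) (ih _ h1)).trans (addUnitL_inst ML.zero)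
    | mul =>
      intro h
      have h' : mulM (evalM v (k ⟨0, by decide⟩)) (evalM v (k ⟨1, by decide⟩)) = 0 := h
      have hc := congrArg Multiset.card h'
      rw [mulM_card] at hc
      simp only [Multiset.card_zero] at hc
      rw [op_mul_eq]
      rcases Nat.mul_eq_zero.mp hc with h0 | h1
      · have h0' : evalM v (k ⟨0, by decide⟩) = 0 := Multiset.card_eq_zero.mp h0
        exact (eqMulML (ih _ h0') (Theory.Eq.refl _)).trans (zeroL_inst _)
      · have h1' : evalM v (k ⟨1, by decide⟩) = 0 := Multiset.card_eq_zero.mp h1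
        exact (eqMulML (Theory.Eq.refl _) (ih _ h1')).trans (zeroR_inst _)

/-- If a term evaluates to the singleton empty word (under a valuation by
singleton nonempty words), it is provably equal to `1`. -/
theorem eval_one_imp {X Y : Type} (v : X → Multiset (List Y))
    (hv : ∀ x, ∃ a w, v x = {a :: w}) :
    ∀ t : Tm MLSig X, evalM v t = {[]} → MLTheory.Eq t ML.one := by
  have hv' : ∀ x, v x ≠ 0 := by
    intro x
    obtain ⟨a, w, e⟩ := hv x
    simp [e]
  intro t
  induction t with
  | var x =>
    intro h
    obtain ⟨a, w, e⟩ := hv x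
    have h2 : ({a :: w} : Multiset (List Y)) = {[]} := e.symm.trans h
    exact absurd (Multiset.singleton_inj.mp h2) (by simp)
  | op g k ih =>
    cases g with
    | zero =>
      intro h
      exact absurd h.symm (by simp [evalM_zero])
    | one =>
      intro _
      rw [show Tm.op MLOp.one k = ML.one from op0_congr rfl _ _]
      exact Theory.Eq.refl _
    | add =>
      intro h
      have h' : evalM v (k ⟨0, by decide⟩) + evalM v (k ⟨1, by decide⟩) = {[]} := h
      have hc := congrArg Multiset.card h'
      rw [Multiset.card_add] at hc
      simp only [Multiset.card_singleton] at hc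
      rw [op_add_eq]
      rcases (by omega : (Multiset.card (evalM v (k ⟨0, by decide⟩)) = 0 ∧ Multiset.card (evalM v (k ⟨1, by decide⟩)) = 1) ∨ (Multiset.card (evalM v (k ⟨0, by decide⟩)) = 1 ∧ Multiset.card (evalM v (k ⟨1, by decide⟩)) = 0)) with ⟨h0, h1⟩ | ⟨h0, h1⟩
      · have e0 : evalM v (k ⟨0, by decide⟩) = 0 := Multiset.card_eq_zero.mp h0
        have e1 : evalM v (k ⟨1, by decide⟩) = {[]} := by
          rw [e0, zero_add] at h'; exact h'
        exact (eqAddML (eval_zero_imp v hv' _ e0) (ih _ e1)).trans (addUnitL_inst ML.one)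
      · have e1 : evalM v (k ⟨1, by decide⟩) = 0 := Multiset.card_eq_zero.mp h1
        have e0 : evalM v (k ⟨0, by decide⟩) = {[]} := by
          rw [e1, add_zero] at h'; exact h'
        exact (eqAddML (ih _ e0) (eval_zero_imp v hv' _ e1)).trans (addUnitR_inst ML.one)
    | mul =>
      intro h
      have h' : mulM (evalM v (k ⟨0, by decide⟩)) (evalM v (k ⟨1, by decide⟩)) = {[]} := h
      have hc := congrArg Multiset.card h'
      rw [mulM_card] at hc
      simp only [Multiset.card_singleton] at hc
      obtain ⟨hc0, hc1⟩ : Multiset.card (evalM v (k ⟨0, by decide⟩)) = 1 ∧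
          Multiset.card (evalM v (k ⟨1, by decide⟩)) = 1 := by
        constructor
        · exact Nat.dvd_one.mp ⟨_, hc.symm⟩
        · exact Nat.dvd_one.mp ⟨_, (Nat.mul_comm _ _ ▸ hc : _ * _ = 1).symm⟩
      obtain ⟨w0, e0⟩ := Multiset.card_eq_one.mp hc0
      obtain ⟨w1, e1⟩ := Multiset.card_eq_one.mp hc1
      rw [e0, e1, mulM_singleton] at h'
      have := Multiset.singleton_inj.mp h'
      obtain ⟨hw0, hw1⟩ := List.append_eq_nil_iff.mp this
      rw [op_mul_eq]
      refine (eqMulML (ih _ ?_) (ih _ ?_)).trans (mulUnitL_inst ML.one)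
      · rw [e0, hw0]
      · rw [e1, hw1]

end NoGoAux
namespace NoGoAux

/-- The signature of the putative composite theory. -/
abbrev SumSig : Sig := MonSig.sum MLSig

/-- The monoid multiplication, as an operation of the sum signature. -/
def mS {X : Type} (a b : Tm SumSig X) : Tm SumSig X :=
  .op (Sum.inl .mul) fun i => if i.val = 0 then a else b

/-- The monoid unit, as a term of the sum signature. -/
def EE : Tm SumSig ℕ := Tm.inL Mon.one

/-- The `ML` constant `0`, as a term of the sum signature. -/
def ZZ : Tm SumSig ℕ := Tm.inR ML.zero

/-- The `ML` constant `1`, as a term of the sum signature. -/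
def II : Tm SumSig ℕ := Tm.inR ML.one

theorem inL_mul {X : Type} (a b : Tm MonSig X) :
    Tm.inL (τ := MLSig) (Mon.mul a b) = mS (Tm.inL a) (Tm.inL b) := by
  unfold Mon.mul mS
  simp only [Tm.inL]
  congr 1
  funext i
  exact apply_ite Tm.inL _ a b

theorem mS_bind {X Y : Type} (a b : Tm SumSig X) (f : X → Tm SumSig Y) :
    (mS a b).bind f = mS (a.bind f) (b.bind f) := by
  unfold mS
  simp only [Tm.bind]
  congr 1
  funext i
  exact apply_ite (fun t => Tm.bind t f) _ a b

theorem EE_bind (f : ℕ → Tm SumSig ℕ) : EE.bind f = EE := by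
  unfold EE Mon.one
  simp only [Tm.inL, Tm.bind]
  exact op0_congr rfl _ _

theorem inRzero_bind {W : Type} (g : W → Tm SumSig ℕ) :
    (Tm.inR (σ := MonSig) (X := W) ML.zero).bind g = ZZ := by
  unfold ZZ ML.zero
  simp only [Tm.inR, Tm.bind]
  exact op0_congr rfl _ _

theorem inRone_bind {W : Type} (g : W → Tm SumSig ℕ) :
    (Tm.inR (σ := MonSig) (X := W) ML.one).bind g = II := by
  unfold II ML.one
  simp only [Tm.inR, Tm.bind]
  exact op0_congr rfl _ _

theorem ZZ_bind (f : ℕ → Tm SumSig ℕ) : ZZ.bind f = ZZ := inRzero_bind f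

theorem II_bind (f : ℕ → Tm SumSig ℕ) : II.bind f = II := inRone_bind f

theorem ZZ_sep : sep (σ := MonSig) (τ := MLSig) (X := Empty) ML.zero (fun e => e.elim) = ZZ := by
  unfold sep ZZ ML.zero
  simp only [Tm.inR, Tm.bind]
  exact op0_congr rfl _ _

theorem II_sep : sep (σ := MonSig) (τ := MLSig) (X := Empty) ML.one (fun e => e.elim) = II := by
  unfold sep II ML.one
  simp only [Tm.inR, Tm.bind]
  exact op0_congr rfl _ _

theorem zero_not_one {Y : Type} :
    ¬ MLTheory.Eq (X := Y) ML.zero ML.one := by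
  intro h
  have := ml_sound h (fun _ => (0 : Multiset (List Y)))
  simp [evalM_mlzero, evalM_mlone] at this

/-- The heart of the no-go theorem. -/
theorem no_composite (C : Composite MonTheory MLTheory) : False := by
  -- unit laws of the monoid theory, available inside the composite theory
  have sUR : MonTheory.Eq (X := ℕ) (Mon.mul (.var 0) Mon.one) (.var 0) := by
    have h := Theory.Eq.ax (Th := MonTheory) MonAx.unitR Tm.var
    erw [bind_var, bind_var] at h; exact h
  have sUL : MonTheory.Eq (X := ℕ) (Mon.mul Mon.one (.var 0)) (.var 0) := by
    have h := Theory.Eq.ax (Th := MonTheory) MonAx.unitL Tm.var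
    erw [bind_var, bind_var] at h; exact h
  have cUR : Theory.Eq ⟨SumSig, C.axioms⟩ (mS (.var 0) EE) (.var 0) := by
    have h := C.containsS _ _ sUR
    erw [inL_mul] at h
    exact h
  have cUL : Theory.Eq ⟨SumSig, C.axioms⟩ (mS EE (.var 0)) (.var 0) := by
    have h := C.containsS _ _ sUL
    erw [inL_mul] at h
    exact h
  have SunitR : ∀ a : Tm SumSig ℕ, Theory.Eq ⟨SumSig, C.axioms⟩ (mS a EE) a := by
    intro a
    have h := eqBind cUR (fun _ => a)
    rw [mS_bind, EE_bind] at h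
    exact h
  have SunitL : ∀ a : Tm SumSig ℕ, Theory.Eq ⟨SumSig, C.axioms⟩ (mS EE a) a := by
    intro a
    have h := eqBind cUL (fun _ => a)
    rw [mS_bind, EE_bind] at h
    exact h
  -- the separated form of `0 ·S y` has a `T`-part provably equal to `0`
  obtain ⟨X₀, t₀, s₀, hB₀⟩ := C.separation (mS ZZ (.var 0))
  have hB : Theory.Eq ⟨SumSig, C.axioms⟩ (mS ZZ (.var 0))
      (sep (σ := MonSig) (τ := MLSig) t₀ s₀) := hB₀
  have ht₀ : MLTheory.Eq t₀ ML.zero := by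
    have h1 := eqBind hB (fun _ => EE)
    rw [mS_bind, ZZ_bind] at h1
    have h2 : ((sep (σ := MonSig) (τ := MLSig) t₀ s₀).bind fun _ => EE)
        = sep t₀ (fun x => (s₀ x).bind fun _ => Mon.one) := sep_bind t₀ s₀ _
    rw [h2] at h1
    -- h1 : mS ZZ EE ≡ sep t₀ s₀'
    have h3 : Theory.Eq ⟨SumSig, C.axioms⟩
        (sep (σ := MonSig) (τ := MLSig) (X := Empty) ML.zero (fun e => e.elim))
        (sep t₀ (fun x => (s₀ x).bind fun _ => Mon.one)) := by
      rw [ZZ_sep]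
      exact (Theory.Eq.symm (SunitR ZZ)).trans h1
    obtain ⟨Y, f₁, f₂, sb, hT, -, -⟩ := C.essentiallyUnique _ _ _ _ h3
    have hT' : MLTheory.Eq ((ML.zero : Tm MLSig Empty).rename f₁) (t₀.rename f₂) := hT
    have he := ml_sound hT' (fun y : Y => ({[y]} : Multiset (List Y)))
    have he0 : evalM (fun y : Y => ({[y]} : Multiset (List Y)))
        ((ML.zero : Tm MLSig Empty).rename f₁) = 0 := rfl
    erw [he0, evalM_rename] at he
    exact eval_zero_imp _ (fun x => by simp) t₀ he.symm
  have key0 : Theory.Eq ⟨SumSig, C.axioms⟩ (mS ZZ (.var 0)) ZZ := by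
    have h := eqBind (C.containsT _ _ ht₀) (fun x : X₀ => Tm.inL (s₀ x))
    erw [inRzero_bind] at h
    exact hB.trans h
  -- the separated form of `y ·S 1` has a `T`-part provably equal to `1`
  obtain ⟨X₁, t₁, s₁, hD₀⟩ := C.separation (mS (.var 0) II)
  have hD : Theory.Eq ⟨SumSig, C.axioms⟩ (mS (.var 0) II)
      (sep (σ := MonSig) (τ := MLSig) t₁ s₁) := hD₀
  have ht₁ : MLTheory.Eq t₁ ML.one := by
    have h1 := eqBind hD (fun _ => EE)
    rw [mS_bind, II_bind] at h1
    have h2 : ((sep (σ := MonSig) (τ := MLSig) t₁ s₁).bind fun _ => EE)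
        = sep t₁ (fun x => (s₁ x).bind fun _ => Mon.one) := sep_bind t₁ s₁ _
    rw [h2] at h1
    have h3 : Theory.Eq ⟨SumSig, C.axioms⟩
        (sep (σ := MonSig) (τ := MLSig) (X := Empty) ML.one (fun e => e.elim))
        (sep t₁ (fun x => (s₁ x).bind fun _ => Mon.one)) := by
      rw [II_sep]
      exact (Theory.Eq.symm (SunitL II)).trans h1
    obtain ⟨Y, f₁, f₂, sb, hT, -, -⟩ := C.essentiallyUnique _ _ _ _ h3
    have hT' : MLTheory.Eq ((ML.one : Tm MLSig Empty).rename f₁) (t₁.rename f₂) := hT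
    have he := ml_sound hT' (fun y : Y => ({[y]} : Multiset (List Y)))
    have he1 : evalM (fun y : Y => ({[y]} : Multiset (List Y)))
        ((ML.one : Tm MLSig Empty).rename f₁) = {[]} := rfl
    erw [he1, evalM_rename] at he
    exact eval_one_imp _ (fun x => ⟨f₂ x, [], rfl⟩) t₁ he.symm
  have key1 : Theory.Eq ⟨SumSig, C.axioms⟩ (mS (.var 0) II) II := by
    have h := eqBind (C.containsT _ _ ht₁) (fun x : X₁ => Tm.inL (s₁ x))
    erw [inRone_bind] at h
    exact hD.trans h
  -- combine: `0 ·S 1` is provably equal to both `0` and `1`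
  have final0 : Theory.Eq ⟨SumSig, C.axioms⟩ (mS ZZ II) ZZ := by
    have h := eqBind key0 (fun _ => II)
    rw [mS_bind, ZZ_bind] at h
    exact h
  have final1 : Theory.Eq ⟨SumSig, C.axioms⟩ (mS ZZ II) II := by
    have h := eqBind key1 (fun _ => ZZ)
    rw [mS_bind, II_bind] at h
    exact h
  have hZI : Theory.Eq ⟨SumSig, C.axioms⟩
      (sep (σ := MonSig) (τ := MLSig) (X := Empty) ML.zero (fun e => e.elim))
      (sep (σ := MonSig) (τ := MLSig) (X := Empty) ML.one (fun e => e.elim)) := by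
    rw [ZZ_sep, II_sep]
    exact final0.symm.trans final1
  obtain ⟨Y, f₁, f₂, sb, hT, -, -⟩ := C.essentiallyUnique _ _ _ _ hZI
  have hT' : MLTheory.Eq ((ML.zero : Tm MLSig Empty).rename f₁)
      ((ML.one : Tm MLSig Empty).rename f₂) := hT
  have he := ml_sound hT' (fun _ : Y => (0 : Multiset (List Y)))
  have he0 : evalM (fun _ : Y => (0 : Multiset (List Y)))
      ((ML.zero : Tm MLSig Empty).rename f₁) = 0 := rfl
  have he1 : evalM (fun _ : Y => (0 : Multiset (List Y)))
      ((ML.one : Tm MLSig Empty).rename f₂) = {[]} := rfl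
  rw [he0, he1] at he
  simp at he

end NoGoAux

/-- There is no composite theory of the theory presenting
`M ∘ L` after the theory of monoids; equivalently (by Pirog–Staton), there is
no distributive law `L ∘ (M∘L) ⇒ (M∘L) ∘ L`. -/
theorem no_composite_ML_after_monoids :
    IsEmpty (Composite MonTheory MLTheory) :=
  ⟨NoGoAux.no_composite⟩
end
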